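/- arXiv:2505.07099 — 5 statements merged into one kernel-verified Lean document; each statement's English description precedes it below -/
import Mathlib

section
/- For every standard Young tableau T of shape λ ⊢ n, the descent set of T equals the complemented descent set of its evacuation: Dsi(T) = {n - i : i ∈ Dsi(ev T)}, and consequently Asi(T) = {n - i : i ∈ Asi(ev T)}. -/
/-
Write `∂ₖ = τₖ ⋯ τ₂ τ₁` (with `τ₁` applied first) for the partial promotions and
`εₖ = ∂₁ ∂₂ ⋯ ∂ₖ` for the partial evacuations, so that `ev = εₙ₋₁`.

Descents are local: `τⱼ` only moves the entries `j` and `j + 1`, and a case analysis of the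
entries `i, i + 1, i + 2` shows that `i` is a descent of `τᵢ₊₁ τᵢ T` iff `i + 1` is a descent
of `T`. Hence `∂ₖ` shifts the descents in `{2, …, k}` down by one, and induction on `k` gives
`i ∈ Des T ↔ k + 1 - i ∈ Des (εₖ T)` for `2 ≤ i ≤ k`. The case `i = 1` follows by applying this
to `εₖ T`, because `εₖ` is an involution: in any group, involutions `t₁, t₂, …` with
`tᵢ tⱼ = tⱼ tᵢ` for `|i - j| ≥ 2` satisfy `εₖ ∂ₖ₊₁ = ∂ₖ₊₁⁻¹ εₖ`, whence `εₖ² = 1`.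
-/

/-- `pos : Fin n → ℕ × ℕ` represents a standard Young tableau of size `n`, where
`pos i` is the (row, column) of the box containing the entry `i+1`.  The conditions say
that the filling is injective and that the boxes directly above and directly to the left
of any box exist and carry smaller entries (so the occupied boxes form a Young diagram and
the entries increase along rows and columns). -/
def IsSYT (n : ℕ) (pos : Fin n → ℕ × ℕ) : Prop :=
  Function.Injective pos ∧
    ∀ (i : Fin n) (r c : ℕ),
      (pos i = (r + 1, c) → ∃ i' : Fin n, i' < i ∧ pos i' = (r, c)) ∧
      (pos i = (r, c + 1) → ∃ i' : Fin n, i' < i ∧ pos i' = (r, c))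

/-- The descent set: `i ∈ Dsi(T)` iff `1 ≤ i < n` and the entry `i+1` lies in a strictly
lower row than the entry `i`. -/
def Dsi (n : ℕ) (pos : Fin n → ℕ × ℕ) : Set ℕ :=
  {i | ∃ (_ : 1 ≤ i) (h2 : i < n), (pos ⟨i - 1, by omega⟩).1 < (pos ⟨i, h2⟩).1}

/-- The ascent set: the complement of the descent set inside `{1,…,n-1}`. -/
def Asi (n : ℕ) (pos : Fin n → ℕ × ℕ) : Set ℕ :=
  {i | 1 ≤ i ∧ i < n ∧ i ∉ Dsi n pos}

open Classical in
/-- The elementary (Bender–Knuth type) involution `τ_i` on standard Young tableaux: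
it interchanges the entries `i` and `i+1` whenever the result is again standard
(i.e. whenever `i` and `i+1` are not in the same row or column), and fixes the
tableau otherwise. -/
noncomputable def tauSYT (n i : ℕ) (pos : Fin n → ℕ × ℕ) : Fin n → ℕ × ℕ :=
  if h : 1 ≤ i ∧ i < n then
    let pos' := pos ∘ (Equiv.swap (⟨i - 1, by omega⟩ : Fin n) (⟨i, h.2⟩ : Fin n))
    if IsSYT n pos' then pos' else pos
  else pos

/-- The Schützenberger evacuation involution, via its standard factorization
`ev = (τ₁τ₂⋯τ_{n-1})(τ₁⋯τ_{n-2})⋯(τ₁τ₂)(τ₁)` into elementary involutions,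
applied from left to right (Stanley, "Promotion and evacuation"). -/
noncomputable def evacSYT (n : ℕ) (pos : Fin n → ℕ × ℕ) : Fin n → ℕ × ℕ :=
  (List.range (n - 1)).foldl
    (fun S j => (List.range (n - 1 - j)).foldl (fun S' m => tauSYT n (m + 1) S') S) pos

theorem swap_apply_lt_swap_apply {n : ℕ} {a b x y : Fin n} (hab : a.val + 1 = b.val)
    (hxy : x < y) (h : ¬(x = a ∧ y = b)) : Equiv.swap a b x < Equiv.swap a b y := by
  rw [Fin.lt_def] at hxy
  simp only [Equiv.swap_apply_def, Fin.lt_def, Fin.ext_iff] at h ⊢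
  split_ifs <;> omega

namespace IsSYT

variable {n : ℕ} {T : Fin n → ℕ × ℕ}

theorem exists_above (hT : IsSYT n T) (j : Fin n) (h : 0 < (T j).1) :
    ∃ k < j, T k = ((T j).1 - 1, (T j).2) :=
  (hT.2 j _ _).1 (Prod.ext (Nat.succ_pred_eq_of_pos h).symm rfl)

theorem exists_left (hT : IsSYT n T) (j : Fin n) (h : 0 < (T j).2) :
    ∃ k < j, T k = ((T j).1, (T j).2 - 1) :=
  (hT.2 j _ _).2 (Prod.ext rfl (Nat.succ_pred_eq_of_pos h).symm)

theorem le_of_apply_le (hT : IsSYT n T) {i j : Fin n} (h : T i ≤ T j) : i ≤ j := by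
  induction j using WellFoundedLT.induction with
  | _ j ih =>
  rcases eq_or_ne (T i) (T j) with he | hne
  · exact (hT.1 he).le
  rw [Prod.le_def] at h
  rcases Nat.lt_or_ge (T i).1 (T j).1 with hr | hr
  · obtain ⟨k, hkj, hk⟩ := hT.exists_above j (by omega)
    exact (ih k hkj (by rw [hk, Prod.le_def]; omega)).trans hkj.le
  · have hc : (T i).2 < (T j).2 := by
      by_contra! hc
      exact hne (Prod.ext (by omega) (by omega))
    obtain ⟨k, hkj, hk⟩ := hT.exists_left j (by omega)
    exact (ih k hkj (by rw [hk, Prod.le_def]; omega)).trans hkj.le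

theorem lt_of_apply_lt (hT : IsSYT n T) {i j : Fin n} (h : T i < T j) : i < j :=
  (hT.le_of_apply_le h.le).lt_of_ne fun e => h.ne (congrArg T e)

theorem eq_of_apply_le_of_lt_succ (hT : IsSYT n T) {m m' k : Fin n} (hm : m.val + 1 = m'.val)
    (hk : k < m') (h : T m ≤ T k) : k = m := by
  have := hT.le_of_apply_le h
  rw [Fin.lt_def] at hk
  rw [Fin.le_def] at this
  exact Fin.ext (by omega)

theorem apply_succ_adjacent (hT : IsSYT n T) {m m' : Fin n} (hm : m.val + 1 = m'.val)
    (h : (T m).1 = (T m').1 ∨ (T m).2 = (T m').2) :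
    (T m').1 = (T m).1 ∧ (T m').2 = (T m).2 + 1 ∨
      (T m').1 = (T m).1 + 1 ∧ (T m').2 = (T m).2 := by
  have hnle : ¬ T m' ≤ T m := fun h' => by
    have := hT.le_of_apply_le h'
    rw [Fin.le_def] at this
    omega
  rw [Prod.le_def] at hnle
  rcases h with hr | hc
  · obtain ⟨k, hk, hTk⟩ := hT.exists_left m' (by omega)
    obtain rfl := hT.eq_of_apply_le_of_lt_succ hm hk (by rw [hTk, Prod.le_def]; omega)
    have := congrArg Prod.snd hTk
    dsimp only at this
    omega
  · obtain ⟨k, hk, hTk⟩ := hT.exists_above m' (by omega)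
    obtain rfl := hT.eq_of_apply_le_of_lt_succ hm hk (by rw [hTk, Prod.le_def]; omega)
    have := congrArg Prod.fst hTk
    dsimp only at this
    omega

/-- The boxes directly above and directly left of `T m'` would both hold the entry of index
`m + 1`. -/
theorem not_diagonal_step (hT : IsSYT n T) {m m' : Fin n} (hm : m.val + 2 = m'.val) :
    ¬((T m').1 = (T m).1 + 1 ∧ (T m').2 = (T m).2 + 1) := by
  rintro ⟨h1, h2⟩
  have h : T m' = ((T m).1 + 1, (T m).2 + 1) := Prod.ext h1 h2
  obtain ⟨k, hk, hTk⟩ := (hT.2 m' (T m).1 ((T m).2 + 1)).1 h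
  obtain ⟨k', hk', hTk'⟩ := (hT.2 m' ((T m).1 + 1) (T m).2).2 h
  have hmk : m < k := hT.lt_of_apply_lt (by rw [hTk]; exact Prod.mk_lt_mk_iff_right.2 (by omega))
  have hmk' : m < k' := hT.lt_of_apply_lt (by rw [hTk']; exact Prod.mk_lt_mk_iff_left.2 (by omega))
  rw [Fin.lt_def] at hk hk' hmk hmk'
  have := hTk.symm.trans (Fin.ext (by omega : k.val = k'.val) ▸ hTk')
  simp at this

theorem comp_swap_iff (hT : IsSYT n T) {a b : Fin n} (hab : a.val + 1 = b.val) :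
    IsSYT n (T ∘ Equiv.swap a b) ↔ (T a).1 ≠ (T b).1 ∧ (T a).2 ≠ (T b).2 := by
  have hba : ¬ b ≤ a := by rw [Fin.le_def]; omega
  constructor
  · intro hT'
    have h1 : ¬ T b ≤ T a := fun h => hba (hT.le_of_apply_le h)
    have h2 : ¬ T a ≤ T b := fun h => hba (hT'.le_of_apply_le (by simpa using h))
    rw [Prod.le_def] at h1 h2
    omega
  · -- The adjacent transposition preserves the order of every pair except `(a, b)`.
    rintro ⟨hr, hc⟩
    refine ⟨hT.1.comp (Equiv.injective _), fun m r c => ⟨fun hm => ?_, fun hm => ?_⟩⟩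
    · obtain ⟨k, hk, hTk⟩ := (hT.2 (Equiv.swap a b m) r c).1 hm
      refine ⟨Equiv.swap a b k, ?_, by simp [hTk]⟩
      refine Equiv.swap_apply_self a b m ▸ swap_apply_lt_swap_apply hab hk ?_
      rintro ⟨rfl, hmb⟩
      exact hc (by rw [hTk, ← hmb, ← Function.comp_apply (f := T), hm])
    · obtain ⟨k, hk, hTk⟩ := (hT.2 (Equiv.swap a b m) r c).2 hm
      refine ⟨Equiv.swap a b k, ?_, by simp [hTk]⟩
      refine Equiv.swap_apply_self a b m ▸ swap_apply_lt_swap_apply hab hk ?_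
      rintro ⟨rfl, hmb⟩
      exact hr (by rw [hTk, ← hmb, ← Function.comp_apply (f := T), hm])

end IsSYT

section BenderKnuth

variable {n : ℕ} {T : Fin n → ℕ × ℕ}

theorem tauSYT_of_not_mem {i : ℕ} (hi : ¬(1 ≤ i ∧ i < n)) : tauSYT n i T = T := by
  rw [tauSYT, dif_neg hi]

open Classical in
theorem tauSYT_of_mem {i : ℕ} (h1 : 1 ≤ i) (h2 : i < n) :
    tauSYT n i T = if IsSYT n (T ∘ Equiv.swap ⟨i - 1, by omega⟩ ⟨i, h2⟩)
      then T ∘ Equiv.swap ⟨i - 1, by omega⟩ ⟨i, h2⟩ else T := by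
  rw [tauSYT, dif_pos ⟨h1, h2⟩]

theorem tauSYT_of_isSYT (hT : IsSYT n T) {a b : Fin n} (hab : a.val + 1 = b.val) :
    tauSYT n b.val T =
      if (T a).1 ≠ (T b).1 ∧ (T a).2 ≠ (T b).2 then T ∘ Equiv.swap a b else T := by
  have ha : (⟨b.val - 1, by omega⟩ : Fin n) = a := Fin.ext (by dsimp only; omega)
  rw [tauSYT_of_mem (by omega) b.2, ha]
  by_cases h : IsSYT n (T ∘ Equiv.swap a b)
  · rw [if_pos h, if_pos ((hT.comp_swap_iff hab).1 h)]
  · rw [if_neg h, if_neg (mt (hT.comp_swap_iff hab).2 h)]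

theorem tauSYT_apply_left (hT : IsSYT n T) {a b : Fin n} (hab : a.val + 1 = b.val) :
    tauSYT n b.val T a = if (T a).1 ≠ (T b).1 ∧ (T a).2 ≠ (T b).2 then T b else T a := by
  rw [tauSYT_of_isSYT hT hab]
  split_ifs <;> simp

theorem tauSYT_apply_right (hT : IsSYT n T) {a b : Fin n} (hab : a.val + 1 = b.val) :
    tauSYT n b.val T b = if (T a).1 ≠ (T b).1 ∧ (T a).2 ≠ (T b).2 then T a else T b := by
  rw [tauSYT_of_isSYT hT hab]
  split_ifs <;> simp

theorem isSYT_tauSYT (hT : IsSYT n T) (i : ℕ) : IsSYT n (tauSYT n i T) := by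
  by_cases hi : 1 ≤ i ∧ i < n
  · rw [tauSYT_of_mem hi.1 hi.2]
    split_ifs with h <;> assumption
  · rwa [tauSYT_of_not_mem hi]

theorem tauSYT_apply_of_ne {i : ℕ} {m : Fin n} (h1 : m.val ≠ i - 1) (h2 : m.val ≠ i) :
    tauSYT n i T m = T m := by
  by_cases hi : 1 ≤ i ∧ i < n
  · rw [tauSYT_of_mem hi.1 hi.2]
    split_ifs
    · rw [Function.comp_apply, Equiv.swap_apply_of_ne_of_ne (by simpa [Fin.ext_iff])
        (by simpa [Fin.ext_iff])]
    · rfl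
  · rw [tauSYT_of_not_mem hi]

theorem tauSYT_tauSYT (hT : IsSYT n T) (i : ℕ) : tauSYT n i (tauSYT n i T) = T := by
  by_cases hi : 1 ≤ i ∧ i < n
  · have hσ : (T ∘ Equiv.swap ⟨i - 1, by omega⟩ ⟨i, hi.2⟩) ∘
        Equiv.swap ⟨i - 1, by omega⟩ ⟨i, hi.2⟩ = T := by funext m; simp
    by_cases h : IsSYT n (T ∘ Equiv.swap ⟨i - 1, by omega⟩ ⟨i, hi.2⟩)
    · rw [tauSYT_of_mem hi.1 hi.2 (T := T), if_pos h, tauSYT_of_mem hi.1 hi.2, hσ, if_pos hT]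
    · rw [tauSYT_of_mem hi.1 hi.2 (T := T), if_neg h, tauSYT_of_mem hi.1 hi.2, if_neg h]
  · rw [tauSYT_of_not_mem hi, tauSYT_of_not_mem hi]

theorem tauSYT_comm (hT : IsSYT n T) {i j : ℕ} (hij : i + 2 ≤ j) :
    tauSYT n i (tauSYT n j T) = tauSYT n j (tauSYT n i T) := by
  by_cases hi : 1 ≤ i ∧ i < n
  swap
  · rw [tauSYT_of_not_mem hi, tauSYT_of_not_mem hi]
  by_cases hj : 1 ≤ j ∧ j < n
  swap
  · rw [tauSYT_of_not_mem hj, tauSYT_of_not_mem hj]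
  obtain ⟨hi1, hi2⟩ := hi
  obtain ⟨hj1, hj2⟩ := hj
  have ea : tauSYT n j T ⟨i - 1, by omega⟩ = T ⟨i - 1, by omega⟩ :=
    tauSYT_apply_of_ne (by dsimp only; omega) (by dsimp only; omega)
  have eb : tauSYT n j T ⟨i, hi2⟩ = T ⟨i, hi2⟩ :=
    tauSYT_apply_of_ne (by dsimp only; omega) (by dsimp only; omega)
  have ec : tauSYT n i T ⟨j - 1, by omega⟩ = T ⟨j - 1, by omega⟩ :=
    tauSYT_apply_of_ne (by dsimp only; omega) (by dsimp only; omega)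
  have ed : tauSYT n i T ⟨j, hj2⟩ = T ⟨j, hj2⟩ :=
    tauSYT_apply_of_ne (by dsimp only; omega) (by dsimp only; omega)
  have hdisj : (Equiv.swap (⟨i - 1, by omega⟩ : Fin n) ⟨i, hi2⟩).Disjoint
      (Equiv.swap ⟨j - 1, by omega⟩ ⟨j, hj2⟩) :=
    Equiv.Perm.disjoint_swap_swap (by
      simp only [List.nodup_cons, List.mem_cons, Fin.ext_iff, List.not_mem_nil, or_false, not_or,
        not_false_eq_true, List.nodup_nil, and_true]
      omega)
  have hi : (⟨i - 1, by omega⟩ : Fin n).val + 1 = (⟨i, hi2⟩ : Fin n).val := by dsimp only; omega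
  have hj : (⟨j - 1, by omega⟩ : Fin n).val + 1 = (⟨j, hj2⟩ : Fin n).val := by dsimp only; omega
  rw [tauSYT_of_isSYT (isSYT_tauSYT hT j) hi, tauSYT_of_isSYT (isSYT_tauSYT hT i) hj,
    ea, eb, ec, ed, tauSYT_of_isSYT hT hi, tauSYT_of_isSYT hT hj]
  split_ifs <;> funext m <;>
    first | rfl | exact congrArg T (DFunLike.congr_fun hdisj.commute.eq m).symm

theorem tauSYT_one (hT : IsSYT n T) : tauSYT n 1 T = T := by
  by_cases hn : 1 < n
  swap
  · exact tauSYT_of_not_mem (by omega)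
  set a : Fin n := ⟨0, by omega⟩
  set b : Fin n := ⟨1, hn⟩
  rw [tauSYT_of_isSYT hT (a := a) (b := b) rfl, if_neg]
  have below_b : ∀ k : Fin n, k < b → k = a := fun k hk => Fin.ext (by
    rw [Fin.lt_def] at hk
    simp only [a, b] at hk ⊢
    omega)
  rintro ⟨hr, hc⟩
  rcases Nat.eq_zero_or_pos (T b).1 with hr0 | hr0
  · rcases Nat.eq_zero_or_pos (T b).2 with hc0 | hc0
    · have := hT.le_of_apply_le (show T b ≤ T a by rw [Prod.le_def]; omega)
      simp [Fin.le_def, a, b] at this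
    · obtain ⟨k, hk, hTk⟩ := hT.exists_left b hc0
      exact hr (by rw [← below_b k hk, hTk])
  · obtain ⟨k, hk, hTk⟩ := hT.exists_above b hr0
    exact hc (by rw [← below_b k hk, hTk])

end BenderKnuth

section Descents

variable {n : ℕ} {T : Fin n → ℕ × ℕ}

theorem mem_Dsi_iff {a b : Fin n} (hab : a.val + 1 = b.val) :
    b.val ∈ Dsi n T ↔ (T a).1 < (T b).1 := by
  have ha : (⟨b.val - 1, by omega⟩ : Fin n) = a := Fin.ext (by dsimp only; omega)
  exact ⟨fun ⟨_, _, h⟩ => ha ▸ h, fun h => ⟨by omega, b.2, ha ▸ h⟩⟩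

theorem mem_Dsi_tauSYT_of_far {i j : ℕ} (h : j + 2 ≤ i ∨ i + 2 ≤ j) :
    i ∈ Dsi n (tauSYT n j T) ↔ i ∈ Dsi n T := by
  refine ⟨fun ⟨h1, h2, hlt⟩ => ⟨h1, h2, ?_⟩, fun ⟨h1, h2, hlt⟩ => ⟨h1, h2, ?_⟩⟩ <;>
  rwa [tauSYT_apply_of_ne (by dsimp only; omega) (by dsimp only; omega),
    tauSYT_apply_of_ne (m := ⟨i, h2⟩) (by dsimp only; omega) (by dsimp only; omega)] at *

theorem mem_Dsi_tauSYT_tauSYT (hT : IsSYT n T) {a b c : Fin n} (hab : a.val + 1 = b.val)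
    (hbc : b.val + 1 = c.val) :
    b.val ∈ Dsi n (tauSYT n c.val (tauSYT n b.val T)) ↔ c.val ∈ Dsi n T := by
  have hS := isSYT_tauSYT hT b.val
  have hSc : tauSYT n b.val T c = T c := tauSYT_apply_of_ne (by omega) (by omega)
  have adj_bc := hS.apply_succ_adjacent hbc
  rw [hSc, tauSYT_apply_right hT hab] at adj_bc
  rw [mem_Dsi_iff hab, mem_Dsi_iff hbc, tauSYT_apply_of_ne (m := a) (by omega) (by omega),
    tauSYT_apply_left hS hbc, hSc, tauSYT_apply_left hT hab, tauSYT_apply_right hT hab]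
  split_ifs at adj_bc ⊢
  · rfl
  · rcases adj_bc (by omega) with h | h <;> omega
  · rcases hT.apply_succ_adjacent hab (by omega) with h | h <;> omega
  · rcases hT.apply_succ_adjacent hab (by omega) with h | h <;>
    rcases adj_bc (by omega) with h' | h' <;>
    first
    | omega
    | exact (hT.not_diagonal_step (m := a) (m' := c) (by omega) ⟨by omega, by omega⟩).elim

end Descents

section Words

variable {G : Type*} [Group G] (t : ℕ → G)

def partialPromotion : ℕ → G
  | 0 => 1
  | k + 1 => t (k + 1) * partialPromotion k

def partialEvacuation : ℕ → G
  | 0 => 1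
  | k + 1 => partialEvacuation k * partialPromotion t (k + 1)

variable {t}

theorem commute_partialPromotion (hcomm : ∀ i j, i + 2 ≤ j → Commute (t i) (t j)) {k j : ℕ}
    (hkj : k + 2 ≤ j) :
    Commute (partialPromotion t k) (t j) := by
  induction k with
  | zero => exact Commute.one_left _
  | succ k ih => exact (hcomm _ _ hkj).mul_left (ih (by omega))

theorem commute_partialEvacuation (hcomm : ∀ i j, i + 2 ≤ j → Commute (t i) (t j)) {k j : ℕ}
    (hkj : k + 2 ≤ j) :
    Commute (partialEvacuation t k) (t j) := by
  induction k with
  | zero => exact Commute.one_left _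
  | succ k ih => exact (ih (by omega)).mul_left (commute_partialPromotion hcomm hkj)

theorem partialEvacuation_mul_partialPromotion
    (hcomm : ∀ i j, i + 2 ≤ j → Commute (t i) (t j)) (hinv : ∀ i, (t i)⁻¹ = t i) (k : ℕ) :
    partialEvacuation t k * partialPromotion t (k + 1) =
      (partialPromotion t (k + 1))⁻¹ * partialEvacuation t k := by
  induction k with
  | zero => simp [partialEvacuation, partialPromotion, hinv]
  | succ k ih =>
    calc partialEvacuation t (k + 1) * partialPromotion t (k + 2)
        = partialEvacuation t k * partialPromotion t (k + 1) * t (k + 2) *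
            partialPromotion t (k + 1) := by
          simp only [partialEvacuation, partialPromotion, mul_assoc]
      _ = (partialPromotion t (k + 1))⁻¹ * (partialEvacuation t k * (t (k + 2))⁻¹) *
            partialPromotion t (k + 1) := by
          rw [ih, hinv, mul_assoc _ (partialEvacuation t k)]
      _ = (partialPromotion t (k + 2))⁻¹ * partialEvacuation t (k + 1) := by
          rw [(commute_partialEvacuation hcomm le_rfl).inv_right.eq]
          simp only [partialEvacuation, partialPromotion, mul_inv_rev, mul_assoc]

theorem partialEvacuation_inv (hcomm : ∀ i j, i + 2 ≤ j → Commute (t i) (t j))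
    (hinv : ∀ i, (t i)⁻¹ = t i) (k : ℕ) :
    (partialEvacuation t k)⁻¹ = partialEvacuation t k := by
  induction k with
  | zero => exact inv_one
  | succ k ih =>
    rw [partialEvacuation, mul_inv_rev, ih,
      ← partialEvacuation_mul_partialPromotion hcomm hinv]

end Words

abbrev SYT (n : ℕ) := {T : Fin n → ℕ × ℕ // IsSYT n T}

namespace SYT

variable {n : ℕ}

noncomputable def benderKnuth (n i : ℕ) : Equiv.Perm (SYT n) :=
  Function.Involutive.toPerm (fun T => ⟨tauSYT n i T.1, isSYT_tauSYT T.2 i⟩)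
    fun T => Subtype.ext (tauSYT_tauSYT T.2 i)

@[simp]
theorem benderKnuth_apply (i : ℕ) (T : SYT n) : (benderKnuth n i T).1 = tauSYT n i T.1 := rfl

theorem benderKnuth_inv (i : ℕ) : (benderKnuth n i)⁻¹ = benderKnuth n i :=
  Function.Involutive.toPerm_symm _

theorem commute_benderKnuth {i j : ℕ} (hij : i + 2 ≤ j) :
    Commute (benderKnuth n i) (benderKnuth n j) :=
  Equiv.ext fun T => Subtype.ext (tauSYT_comm T.2 hij)

theorem benderKnuth_one : benderKnuth n 1 = 1 :=
  Equiv.ext fun T => Subtype.ext (tauSYT_one T.2)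

theorem partialEvacuation_benderKnuth_involutive (k : ℕ) :
    Function.Involutive ⇑(partialEvacuation (benderKnuth n) k) := fun T => by
  rw [← Equiv.Perm.mul_apply]
  nth_rw 1 [← partialEvacuation_inv (fun _ _ => commute_benderKnuth) benderKnuth_inv k]
  rw [inv_mul_cancel, Equiv.Perm.one_apply]

theorem mem_Dsi_partialPromotion_of_le {i k : ℕ} (hki : k + 2 ≤ i) (T : SYT n) :
    i ∈ Dsi n (partialPromotion (benderKnuth n) k T).1 ↔ i ∈ Dsi n T.1 := by
  induction k with
  | zero => rfl
  | succ k ih =>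
    rw [partialPromotion, Equiv.Perm.mul_apply, benderKnuth_apply,
      mem_Dsi_tauSYT_of_far (Or.inl hki), ih (by omega)]

theorem mem_Dsi_partialPromotion_of_lt {i k : ℕ} (hik : i + 1 ≤ k) (T : SYT n) :
    i ∈ Dsi n (partialPromotion (benderKnuth n) k T).1 ↔
      i ∈ Dsi n (partialPromotion (benderKnuth n) (i + 1) T).1 := by
  induction k, hik using Nat.le_induction with
  | base => rfl
  | succ k hk ih =>
    rw [partialPromotion, Equiv.Perm.mul_apply, benderKnuth_apply,
      mem_Dsi_tauSYT_of_far (Or.inr (by omega)), ih]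

theorem mem_Dsi_partialPromotion {i k : ℕ} (hi : 1 ≤ i) (hik : i < k) (hin : i + 1 < n)
    (T : SYT n) :
    i ∈ Dsi n (partialPromotion (benderKnuth n) k T).1 ↔ i + 1 ∈ Dsi n T.1 := by
  obtain ⟨p, rfl⟩ : ∃ p, i = p + 1 := ⟨i - 1, by omega⟩
  rw [mem_Dsi_partialPromotion_of_lt hik, ← mem_Dsi_partialPromotion_of_le (k := p) le_rfl]
  exact mem_Dsi_tauSYT_tauSYT (partialPromotion (benderKnuth n) p T).2
    (a := ⟨p, by omega⟩) (b := ⟨p + 1, by omega⟩) (c := ⟨p + 2, by omega⟩) rfl rfl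

theorem mem_Dsi_partialEvacuation {k : ℕ} (hk : k < n) {i j : ℕ} (hi : 1 ≤ i) (hj : 1 ≤ j)
    (hij : i + j = k + 1) (T : SYT n) :
    i ∈ Dsi n T.1 ↔ j ∈ Dsi n (partialEvacuation (benderKnuth n) k T).1 := by
  induction k generalizing i j T with
  | zero => omega
  | succ k ih =>
    have shift : ∀ (T : SYT n) (i j : ℕ), 2 ≤ i → 1 ≤ j → i + j = k + 2 →
        (i ∈ Dsi n T.1 ↔ j ∈ Dsi n (partialEvacuation (benderKnuth n) (k + 1) T).1) := by
      intro T i j hi hj hij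
      rw [partialEvacuation, Equiv.Perm.mul_apply, ← ih (by omega) (i := i - 1) (by omega) hj
        (by omega), mem_Dsi_partialPromotion (by omega) (by omega) (by omega),
        Nat.sub_add_cancel (by omega)]
    rcases Nat.lt_or_ge 1 i with hi2 | hi1
    · exact shift T i j hi2 hj hij
    -- For `i = 1`, apply `shift` to the evacuated tableau, using that evacuation is involutive.
    obtain rfl : i = 1 := by omega
    obtain rfl : j = k + 1 := by omega
    rcases Nat.eq_zero_or_pos k with rfl | hk0
    · simp [partialEvacuation, partialPromotion, benderKnuth_one]
    · rw [shift _ (k + 1) 1 (by omega) le_rfl (by omega), partialEvacuation_benderKnuth_involutive]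

theorem foldl_tauSYT_eq_partialPromotion (K : ℕ) (T : SYT n) :
    (List.range K).foldl (fun S m => tauSYT n (m + 1) S) T.1 =
      (partialPromotion (benderKnuth n) K T).1 := by
  induction K with
  | zero => rfl
  | succ K ih => rw [List.range_succ, List.foldl_append, ih]; rfl

theorem evacSYT_eq_partialEvacuation (T : SYT n) :
    evacSYT n T.1 = (partialEvacuation (benderKnuth n) (n - 1) T).1 := by
  rw [evacSYT]
  generalize n - 1 = M
  induction M generalizing T with
  | zero => rfl
  | succ M ih =>
    rw [List.range_succ_eq_map, List.foldl_cons, List.foldl_map, Nat.sub_zero,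
      foldl_tauSYT_eq_partialPromotion]
    simp only [Nat.succ_sub_succ]
    rw [ih]
    rfl

end SYT

theorem eq_image_sub_of_mem_iff {n : ℕ} {A B : Set ℕ} (hA : A ⊆ Set.Ico 1 n)
    (hB : B ⊆ Set.Ico 1 n) (h : ∀ i, 1 ≤ i → i < n → (i ∈ A ↔ n - i ∈ B)) :
    A = (fun i => n - i) '' B := by
  ext x
  constructor
  · intro hx
    obtain ⟨h1, h2⟩ := hA hx
    exact ⟨n - x, (h x h1 h2).1 hx, Nat.sub_sub_self h2.le⟩
  · rintro ⟨i, hi, rfl⟩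
    obtain ⟨h1, h2⟩ := hB hi
    exact (h (n - i) (by omega) (by omega)).2 (by rwa [Nat.sub_sub_self h2.le])

theorem Dsi_subset_Ico (n : ℕ) (T : Fin n → ℕ × ℕ) : Dsi n T ⊆ Set.Ico 1 n :=
  fun _ ⟨h1, h2, _⟩ => ⟨h1, h2⟩

theorem Asi_subset_Ico (n : ℕ) (T : Fin n → ℕ × ℕ) : Asi n T ⊆ Set.Ico 1 n :=
  fun _ ⟨h1, h2, _⟩ => ⟨h1, h2⟩

/-- For every standard Young tableau `T` of size `n`,
`Dsi(T) = {n - i : i ∈ Dsi(ev T)}` and `Asi(T) = {n - i : i ∈ Asi(ev T)}`. -/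
theorem stmt2 (n : ℕ) (pos : Fin n → ℕ × ℕ) (hpos : IsSYT n pos) :
    Dsi n pos = (fun i => n - i) '' Dsi n (evacSYT n pos) ∧
    Asi n pos = (fun i => n - i) '' Asi n (evacSYT n pos) := by
  have hDsi : ∀ i, 1 ≤ i → i < n → (i ∈ Dsi n pos ↔ n - i ∈ Dsi n (evacSYT n pos)) := by
    intro i h1 h2
    rw [show evacSYT n pos = _ from SYT.evacSYT_eq_partialEvacuation ⟨pos, hpos⟩]
    exact SYT.mem_Dsi_partialEvacuation (by omega) h1 (by omega) (by omega) ⟨pos, hpos⟩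
  refine ⟨eq_image_sub_of_mem_iff (Dsi_subset_Ico _ _) (Dsi_subset_Ico _ _) hDsi,
    eq_image_sub_of_mem_iff (Asi_subset_Ico _ _) (Asi_subset_Ico _ _) fun i h1 h2 => ?_⟩
  have : 1 ≤ n - i ∧ n - i < n := by omega
  simp only [Asi, Set.mem_ofPred_eq, hDsi i h1 h2]
  tauto
end

section
/- A Q-subspace of the ring Λ̃ of eventually symmetric functions is invariant under the action of S_∞ (the group of permutations of the positive integers fixing all but finitely many integers) if and only if it is invariant under the action of the full symmetric group S_N of all permutations of the positive integers. -/
/-- The action of a permutation of the (countably many) variables on a formal power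
series, by permuting the variables. -/
noncomputable def permAct (σ : Equiv.Perm ℕ) (F : MvPowerSeries ℕ ℚ) : MvPowerSeries ℕ ℚ :=
  fun m => MvPowerSeries.coeff (Finsupp.equivMapDomain σ.symm m) F

/-- The total degree of a monomial exponent. -/
def totalDeg (m : ℕ →₀ ℕ) : ℕ := m.sum fun _ e => e

/-- A power series has bounded (total) degree. -/
def BoundedDeg (F : MvPowerSeries ℕ ℚ) : Prop :=
  ∃ D : ℕ, ∀ m : ℕ →₀ ℕ, D < totalDeg m → MvPowerSeries.coeff m F = 0

/-- `F` is eventually symmetric: it has bounded degree and it is fixed by every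
permutation of the variables fixing the first `n` of them, for some `n`. -/
def EvSym (F : MvPowerSeries ℕ ℚ) : Prop :=
  BoundedDeg F ∧ ∃ n : ℕ, ∀ σ : Equiv.Perm ℕ, (∀ i < n, σ i = i) → permAct σ F = F

/-!
An eventually symmetric `F` is fixed by the permutations fixing `0, …, n - 1`, so `permAct σ F`
only depends on `σ` restricted to `{0, …, n - 1}`. Every `σ` agrees there with a permutation
moving only finitely many integers, so `S_ℕ`-orbits of elements of `Λ̃` are `S_∞`-orbits.
-/

lemma permAct_mul (σ ρ : Equiv.Perm ℕ) (F : MvPowerSeries ℕ ℚ) :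
    permAct (σ * ρ) F = permAct σ (permAct ρ F) := by
  funext m
  show MvPowerSeries.coeff (Finsupp.equivMapDomain (σ * ρ).symm m) F
      = MvPowerSeries.coeff (Finsupp.equivMapDomain ρ.symm (Finsupp.equivMapDomain σ.symm m)) F
  rw [← Finsupp.equivMapDomain_trans]
  rfl

lemma permAct_eq_of_eqOn_of_fixed {F : MvPowerSeries ℕ ℚ} {n : ℕ}
    (hF : ∀ ρ : Equiv.Perm ℕ, (∀ i < n, ρ i = i) → permAct ρ F = F)
    {σ τ : Equiv.Perm ℕ} (hστ : ∀ i < n, σ i = τ i) :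
    permAct σ F = permAct τ F := by
  have hfix : permAct (τ⁻¹ * σ) F = F :=
    hF _ fun i hi => by simp [Equiv.Perm.mul_apply, hστ i hi]
  rw [← mul_inv_cancel_left τ σ, permAct_mul, hfix]

/-- The permutation is built one value at a time: after fixing `τ` on `{0, …, k - 1}`, compose
with the swap of `σ k` and `τ k`, which moves neither `τ 0, …, τ (k - 1)` nor large integers. -/
lemma Equiv.Perm.exists_eventually_fixed_eqOn_lt (σ : Equiv.Perm ℕ) (n : ℕ) :
    ∃ τ : Equiv.Perm ℕ, (∃ m : ℕ, ∀ i, m ≤ i → τ i = i) ∧ ∀ i < n, τ i = σ i := by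
  induction n with
  | zero => exact ⟨1, ⟨0, fun _ _ => rfl⟩, fun _ h => absurd h (Nat.not_lt_zero _)⟩
  | succ k ih =>
    obtain ⟨τ, ⟨m, hm⟩, hτ⟩ := ih
    refine ⟨Equiv.swap (σ k) (τ k) * τ, ⟨max (max (σ k) (τ k) + 1) m, fun i hi => ?_⟩,
      fun i hi => ?_⟩
    · have hτi : τ i = i := hm i (le_of_max_le_right hi)
      have hbig : max (σ k) (τ k) < i := le_of_max_le_left hi
      rw [Equiv.Perm.mul_apply, hτi, Equiv.swap_apply_of_ne_of_ne (by omega) (by omega)]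
    · rcases Nat.lt_succ_iff_lt_or_eq.mp hi with hik | rfl
      · have hσ : σ i ≠ σ k := σ.injective.ne hik.ne
        have hτ' : σ i ≠ τ k := hτ i hik ▸ τ.injective.ne hik.ne
        rw [Equiv.Perm.mul_apply, hτ i hik, Equiv.swap_apply_of_ne_of_ne hσ hτ']
      · rw [Equiv.Perm.mul_apply, Equiv.swap_apply_right]

/-- A `ℚ`-subspace of the eventually symmetric functions is invariant under `S_∞`
(permutations moving only finitely many integers) iff it is invariant under the full
infinite symmetric group `S_ℕ`. -/
theorem stmt8 (V : Submodule ℚ (MvPowerSeries ℕ ℚ)) (hV : ∀ F ∈ V, EvSym F) :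
    (∀ σ : Equiv.Perm ℕ, (∃ n : ℕ, ∀ i, n ≤ i → σ i = i) → ∀ F ∈ V, permAct σ F ∈ V) ↔
    (∀ σ : Equiv.Perm ℕ, ∀ F ∈ V, permAct σ F ∈ V) := by
  refine ⟨fun hfin σ F hF => ?_, fun hall σ _ => hall σ⟩
  obtain ⟨-, n, hn⟩ := hV F hF
  obtain ⟨τ, hτfin, hτσ⟩ := σ.exists_eventually_fixed_eqOn_lt n
  rw [permAct_eq_of_eqOn_of_fixed hn fun i hi => (hτσ i hi).symm]
  exact hfin τ hτfin F hF
end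

section
/- Fix k ≥ 1, a partition λ ⊢ n, and a cocharge tableau C of shape λ with D := Dsp^c(C) ⊆ {1,...,n}. Then the map sending a finite subset I ⊆ N of positive integers containing D to the vector h⃗_C^I = (h_r)_{r≥1}, where r_i := |{j ∈ N \ I : j < i}| for i ∈ I and h_r := |{i ∈ I \ D : r_i = r}|, is a bijection between the collection of finite subsets I ⊆ N containing D with |I| = k-1 and the set H_C^k of vectors (h_r)_{r≥1} of non-negative integers with finitely many non-zero entries satisfying Σ_r h_r < k - |D|. -/
/-- `r_i`: the number of positive integers smaller than `i` that do not belong to `I`. -/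
def rVal (I : Finset ℕ) (i : ℕ) : ℕ := ((Finset.Ico 1 i).filter fun j => j ∉ I).card

/-- The vector `h⃗_C^I`: its `r`-th entry (`r ≥ 1`) is the number of elements
`i ∈ I \ D` with `r_i = r`. -/
def hVec (D I : Finset ℕ) : ℕ → ℕ := fun r =>
  if r = 0 then 0 else ((I \ D).filter fun i => rVal I i = r).card

/-!
Removing `D` from `I` and relabelling the positive integers outside `D` increasingly by
`0, 1, 2, …` (`Nat.count` and `Nat.nth`) turns `I` into a `(k - 1 - |D|)`-subset `S` of `ℕ`, and
`r_i` into the number of non-elements of `S` below the label of `i`. Recording these numbers as a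
multiset is the classical bijection between `K`-subsets and `K`-multisets of `ℕ`
(`s₁ < ⋯ < s_K ↦ s_j - (j - 1)`), inverted by peeling off the largest element. Finally a
`K`-multiset is determined by its positive multiplicities `h_r`, the multiplicity of `0` being
`K - ∑ h_r`.
-/

open Finset

namespace GapMultiset

def gapsBelow (S : Finset ℕ) (m : ℕ) : ℕ := #(range m \ S)

def gaps (S : Finset ℕ) : Multiset ℕ := S.val.map (gapsBelow S)

lemma card_gaps (S : Finset ℕ) : Multiset.card (gaps S) = #S := Multiset.card_map _ _

lemma count_gaps (S : Finset ℕ) (r : ℕ) : (gaps S).count r = #{s ∈ S | gapsBelow S s = r} := by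
  rw [gaps, Multiset.count_map, card_def, filter_val]
  simp only [eq_comm]

lemma gapsBelow_mono (S : Finset ℕ) : Monotone (gapsBelow S) := fun _ _ hab =>
  card_le_card (sdiff_subset_sdiff (range_subset_range.2 hab) le_rfl)

lemma card_range_inter_add_gapsBelow (S : Finset ℕ) (m : ℕ) :
    #(range m ∩ S) + gapsBelow S m = m := by
  rw [gapsBelow, add_comm, card_sdiff_add_card_inter, card_range]

lemma gapsBelow_insert_of_le {S : Finset ℕ} {M x : ℕ} (hx : x ≤ M) :
    gapsBelow (insert M S) x = gapsBelow S x := by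
  unfold gapsBelow
  congr 1
  ext j
  simp only [mem_sdiff, mem_range, mem_insert]
  have : j < x → j ≠ M := by omega
  tauto

lemma gapsBelow_of_forall_lt {S : Finset ℕ} {M : ℕ} (h : ∀ s ∈ S, s < M) :
    gapsBelow S M = M - #S := by
  have hS : range M ∩ S = S := inter_eq_right.2 fun s hs => mem_range.2 (h s hs)
  have := card_range_inter_add_gapsBelow S M
  rw [hS] at this
  omega

lemma gaps_insert_of_forall_lt {S : Finset ℕ} {M : ℕ} (h : ∀ s ∈ S, s < M) :
    gaps (insert M S) = (M - #S) ::ₘ gaps S := by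
  have hM : M ∉ S := fun hM => (h M hM).false
  rw [gaps, insert_val_of_notMem hM, Multiset.map_cons, gapsBelow_insert_of_le le_rfl,
    gapsBelow_of_forall_lt h, gaps]
  exact congrArg _ (Multiset.map_congr rfl fun s hs => gapsBelow_insert_of_le (h s hs).le)

lemma le_of_mem_gaps {S : Finset ℕ} {M : ℕ} (h : ∀ s ∈ S, s < M) :
    ∀ g ∈ gaps S, g ≤ M - #S := by
  intro g hg
  obtain ⟨s, hs, rfl⟩ := Multiset.mem_map.1 hg
  rw [← gapsBelow_of_forall_lt h]
  exact gapsBelow_mono S (h s hs).le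

lemma lt_add_card_of_forall_mem_gaps_le {S : Finset ℕ} {a : ℕ} (h : ∀ g ∈ gaps S, g ≤ a) :
    ∀ s ∈ S, s < a + #S := by
  intro s hs
  have hcard : #(range s ∩ S) < #S :=
    card_lt_card ⟨inter_subset_right, fun hsub => by simpa using hsub hs⟩
  have := card_range_inter_add_gapsBelow S s
  have := h _ (Multiset.mem_map_of_mem _ hs)
  omega

lemma card_le_of_forall_lt {S : Finset ℕ} {M : ℕ} (h : ∀ s ∈ S, s < M) : #S ≤ M := by
  simpa using card_le_card fun s hs => mem_range.2 (h s hs)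

theorem gaps_injective : Function.Injective gaps := by
  have head_le {a b : ℕ} {m m' : Multiset ℕ} (hb : ∀ x ∈ m', x ≤ b) (e : a ::ₘ m = b ::ₘ m') :
      a ≤ b := by
    rcases Multiset.mem_cons.1 (e ▸ Multiset.mem_cons_self a m) with rfl | ha
    exacts [le_rfl, hb a ha]
  intro S T hST
  induction S using Finset.induction_on_max generalizing T with
  | empty => simpa [card_gaps, eq_comm] using congrArg Multiset.card hST
  | insert M S hS ih =>
    induction T using Finset.induction_on_max with
    | empty => simpa [card_gaps] using congrArg Multiset.card hST
    | insert M' T hT _ =>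
      rw [gaps_insert_of_forall_lt hS, gaps_insert_of_forall_lt hT] at hST
      have hcard : #S = #T := by simpa [card_gaps] using congrArg Multiset.card hST
      have hhead := le_antisymm (head_le (le_of_mem_gaps hT) hST)
        (head_le (le_of_mem_gaps hS) hST.symm)
      have := card_le_of_forall_lt hS
      have := card_le_of_forall_lt hT
      rw [ih (Multiset.cons_inj_right _ |>.1 (hhead ▸ hST)), show M = M' by omega]

theorem gaps_surjective : Function.Surjective gaps := by
  intro m
  induction hn : Multiset.card m generalizing m with
  | zero => exact ⟨∅, by simp [gaps, Multiset.card_eq_zero.1 hn]⟩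
  | succ n ih =>
    obtain ⟨a, ha, hmax⟩ := m.exists_max_image (fun x : ℕ => x) (by rintro rfl; simp at hn)
    obtain ⟨S, hS⟩ := ih (m.erase a) (by rw [Multiset.card_erase_of_mem ha, hn]; rfl)
    have hlt := lt_add_card_of_forall_mem_gaps_le fun g hg =>
      hmax g (Multiset.mem_of_mem_erase (hS ▸ hg))
    refine ⟨insert (a + #S) S, ?_⟩
    rw [gaps_insert_of_forall_lt hlt, Nat.add_sub_cancel, hS, Multiset.cons_erase ha]

lemma bijOn_gaps (K : ℕ) : Set.BijOn gaps {S | #S = K} {m | Multiset.card m = K} := by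
  refine ⟨fun S hS => (card_gaps S).trans hS, gaps_injective.injOn, fun m hm => ?_⟩
  obtain ⟨S, hS⟩ := gaps_surjective m
  exact ⟨S, (card_gaps S).symm.trans (hS ▸ hm), hS⟩

def posCount (m : Multiset ℕ) (r : ℕ) : ℕ := if r = 0 then 0 else m.count r

lemma exists_multiset_count_eq {h : ℕ → ℕ} {N : ℕ} (hN : ∀ r, N ≤ r → h r = 0) :
    ∃ m : Multiset ℕ, Multiset.card m = ∑ r ∈ range N, h r ∧ ∀ r, m.count r = h r := by
  refine ⟨∑ r ∈ range N, Multiset.replicate (h r) r, by simp [Multiset.card_sum], fun r => ?_⟩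
  simp only [Multiset.count_sum', Multiset.count_replicate, sum_ite_eq', mem_range]
  split_ifs with hr
  · rfl
  · exact (hN r (not_lt.1 hr)).symm

lemma count_zero_eq_of_posCount_eq {m m' : Multiset ℕ}
    (hcard : Multiset.card m = Multiset.card m') (h : posCount m = posCount m') :
    m.count 0 = m'.count 0 := by
  have hpos : m.filter (· ≠ 0) = m'.filter (· ≠ 0) := by
    ext r
    simpa [Multiset.count_filter, posCount] using congrFun h r
  have hsplit (m : Multiset ℕ) :
      Multiset.card m = m.count 0 + Multiset.card (m.filter (· ≠ 0)) := by
    rw [← Multiset.card_replicate (m.count 0) 0, ← Multiset.filter_eq', ← Multiset.card_add,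
      Multiset.filter_add_not]
  have := hsplit m
  have := hsplit m'
  rw [hpos] at *
  omega

lemma bijOn_posCount (K : ℕ) :
    Set.BijOn posCount {m | Multiset.card m = K}
      {h | h 0 = 0 ∧ ∃ N, (∀ r, N ≤ r → h r = 0) ∧ ∑ r ∈ range N, h r ≤ K} := by
  refine ⟨fun m hm => ⟨if_pos rfl, m.sup + 1, fun r hr => ?_, ?_⟩, fun m hm m' hm' h => ?_,
    fun h ⟨h0, N, hN, hsum⟩ => ?_⟩
  · unfold posCount
    split_ifs
    exacts [rfl, Multiset.count_eq_zero.2 fun hr' => by have := Multiset.le_sup hr'; omega]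
  · calc ∑ r ∈ range (m.sup + 1), posCount m r
        ≤ ∑ r ∈ range (m.sup + 1), m.count r := sum_le_sum fun r _ => by
          unfold posCount; split_ifs <;> simp
      _ = K := by
          rw [Multiset.sum_count_eq_card fun a ha => mem_range.2 (Nat.lt_succ_of_le
            (Multiset.le_sup ha))]
          exact hm
  · ext r
    by_cases hr : r = 0
    · exact hr ▸ count_zero_eq_of_posCount_eq (hm.trans hm'.symm) h
    · simpa [posCount, hr] using congrFun h r
  · obtain ⟨m, hmcard, hmcount⟩ := exists_multiset_count_eq hN
    refine ⟨Multiset.replicate (K - ∑ r ∈ range N, h r) 0 + m, ?_, funext fun r => ?_⟩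
    · simp only [Set.mem_ofPred_eq, Multiset.card_add, Multiset.card_replicate, hmcard]
      omega
    · unfold posCount
      split_ifs with hr
      · rw [hr, h0]
      · simp [Multiset.count_replicate, hmcount, Ne.symm hr]

lemma card_filter_mem_nth_notMem_image_nth {p : ℕ → Prop} [DecidablePred p]
    (hp : (Set.ofPred p).Infinite) (S : Finset ℕ) (m : ℕ) :
    #{j ∈ range (Nat.nth p m) | p j ∧ j ∉ S.image (Nat.nth p)} = gapsBelow S m := by
  rw [gapsBelow, ← card_image_of_injective (range m \ S) (Nat.nth_injective hp)]
  congr 1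
  ext j
  simp only [mem_filter, mem_range, mem_image, mem_sdiff]
  constructor
  · rintro ⟨hj, hpj, hjS⟩
    refine ⟨Nat.count p j, ⟨?_, fun hS => hjS ⟨_, hS, Nat.nth_count hpj⟩⟩, Nat.nth_count hpj⟩
    rwa [← Nat.nth_lt_nth hp, Nat.nth_count hpj]
  · rintro ⟨a, ⟨ham, haS⟩, rfl⟩
    refine ⟨(Nat.nth_lt_nth hp).2 ham, Nat.nth_mem_of_infinite hp a, ?_⟩
    rintro ⟨b, hb, hba⟩
    exact haS (Nat.nth_injective hp hba ▸ hb)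

abbrev PosNotIn (D : Finset ℕ) (n : ℕ) : Prop := 0 < n ∧ n ∉ D

lemma infinite_posNotIn (D : Finset ℕ) : (Set.ofPred (PosNotIn D)).Infinite := by
  have : Set.ofPred (PosNotIn D) = (↑(insert 0 D) : Set ℕ)ᶜ := by
    ext n
    simp [PosNotIn, Nat.pos_iff_ne_zero]
  rw [this]
  exact (finite_toSet _).infinite_compl

lemma disjoint_image_nth_posNotIn (D S : Finset ℕ) :
    Disjoint D (S.image (Nat.nth (PosNotIn D))) :=
  disjoint_right.2 fun _ hi => by
    obtain ⟨a, -, rfl⟩ := mem_image.1 hi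
    exact (Nat.nth_mem_of_infinite (infinite_posNotIn D) a).2

lemma rVal_union_image_nth (D S : Finset ℕ) (m : ℕ) :
    rVal (D ∪ S.image (Nat.nth (PosNotIn D))) (Nat.nth (PosNotIn D) m) = gapsBelow S m := by
  rw [rVal, ← card_filter_mem_nth_notMem_image_nth (infinite_posNotIn D)]
  congr 1
  ext j
  simp only [mem_filter, mem_Ico, mem_range, mem_union, PosNotIn, Nat.one_le_iff_ne_zero,
    Nat.pos_iff_ne_zero]
  tauto

lemma hVec_union_image_nth (D S : Finset ℕ) :
    hVec D (D ∪ S.image (Nat.nth (PosNotIn D))) = posCount (gaps S) := by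
  funext r
  unfold hVec posCount
  split_ifs
  · rfl
  rw [union_sdiff_cancel_left (disjoint_image_nth_posNotIn D S), filter_image,
    card_image_of_injective _ (Nat.nth_injective (infinite_posNotIn D)), count_gaps]
  simp only [rVal_union_image_nth]

lemma union_image_nth_image_count {D I : Finset ℕ} (hDI : D ⊆ I) (hI : ∀ i ∈ I, 0 < i) :
    D ∪ ((I \ D).image (Nat.count (PosNotIn D))).image (Nat.nth (PosNotIn D)) = I := by
  have hid : Set.EqOn (Nat.nth (PosNotIn D) ∘ Nat.count (PosNotIn D)) id ↑(I \ D) :=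
    fun i hi => by
      obtain ⟨hiI, hiD⟩ := mem_sdiff.1 hi
      exact Nat.nth_count ⟨hI i hiI, hiD⟩
  rw [image_image, image_congr hid, image_id, union_sdiff_of_subset hDI]

lemma bijOn_image_count {D : Finset ℕ} (hD : ∀ i ∈ D, 0 < i) {n : ℕ} (hDn : #D ≤ n) :
    Set.BijOn (fun I => (I \ D).image (Nat.count (PosNotIn D)))
      {I | D ⊆ I ∧ #I = n ∧ ∀ i ∈ I, 0 < i} {S | #S = n - #D} := by
  have hinf := infinite_posNotIn D
  refine ⟨fun I ⟨hDI, hIn, hI⟩ => ?_, fun I ⟨hDI, _, hI⟩ J ⟨hDJ, _, hJ⟩ hIJ => ?_,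
    fun S hS => ?_⟩
  · rw [Set.mem_ofPred_eq, card_image_of_injOn, card_sdiff_of_subset hDI, hIn]
    intro a ha b hb
    exact Nat.count_injective ⟨hI a (mem_sdiff.1 ha).1, (mem_sdiff.1 ha).2⟩
      ⟨hI b (mem_sdiff.1 hb).1, (mem_sdiff.1 hb).2⟩
  · rw [← union_image_nth_image_count hDI hI, ← union_image_nth_image_count hDJ hJ]
    exact congrArg (fun S => D ∪ S.image (Nat.nth (PosNotIn D))) hIJ
  · refine ⟨D ∪ S.image (Nat.nth (PosNotIn D)), ⟨subset_union_left, ?_, ?_⟩, ?_⟩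
    · rw [card_union_of_disjoint (disjoint_image_nth_posNotIn D S),
        card_image_of_injective _ (Nat.nth_injective hinf)]
      exact (Nat.add_sub_cancel' hDn ▸ congrArg (#D + ·) hS :)
    · intro i hi
      rcases mem_union.1 hi with hiD | hiS
      · exact hD i hiD
      · obtain ⟨a, -, rfl⟩ := mem_image.1 hiS
        exact (Nat.nth_mem_of_infinite hinf a).1
    · dsimp only
      rw [union_sdiff_cancel_left (disjoint_image_nth_posNotIn D S), image_image,
        show Nat.count (PosNotIn D) ∘ Nat.nth (PosNotIn D) = id from
          funext (Nat.count_nth_of_infinite hinf), image_id]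

end GapMultiset

open GapMultiset in
/-- The map `I ↦ h⃗_C^I` is a bijection between the finite sets `I` of positive integers
containing `D = Dsp^c(C)` with `|I| = k - 1`, and the set `H_C^k` of finitely supported
vectors `(h_r)_{r ≥ 1}` of non-negative integers with `∑_r h_r < k - |D|`. -/
theorem stmt10 (k : ℕ) (hk : 1 ≤ k) (D : Finset ℕ) (hD : ∀ i ∈ D, 0 < i)
    (hDk : D.card ≤ k - 1) :
    Set.BijOn (hVec D)
      {I : Finset ℕ | D ⊆ I ∧ I.card = k - 1 ∧ ∀ i ∈ I, 0 < i}
      {h : ℕ → ℕ | h 0 = 0 ∧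
        ∃ N : ℕ, (∀ r, N ≤ r → h r = 0) ∧ ∑ r ∈ Finset.range N, h r < k - D.card} := by
  have hEq : Set.EqOn (posCount ∘ gaps ∘ fun I => (I \ D).image (Nat.count (PosNotIn D)))
      (hVec D) {I : Finset ℕ | D ⊆ I ∧ I.card = k - 1 ∧ ∀ i ∈ I, 0 < i} :=
    fun I ⟨hDI, _, hI⟩ => by
      rw [Function.comp_apply, Function.comp_apply, ← hVec_union_image_nth,
        union_image_nth_image_count hDI hI]
  have hK : k - D.card = k - 1 - D.card + 1 := by omega
  simp_rw [hK, Nat.lt_succ_iff]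
  exact ((bijOn_posCount _).comp ((bijOn_gaps _).comp (bijOn_image_count hD hDk))).congr hEq
end

section
/- Let λ ⊢ n, let T be a standard Young tableau of shape λ, let M be a semi-standard Young tableau of shape λ with non-negative integer entries, and let F_{M,T} be the generalized higher Specht polynomial, defined as the image of the R(T)-orbit sum of the monomial p_{M,T} = Π_i x_i^{h_i} (where h_i is the entry of M in the box of T containing i) under the signed column-group operator Σ_{σ ∈ C(T)} sgn(σ)σ. Then the coefficient of the monomial p_{M,T} in F_{M,T} equals 1. -/
/-- The row group `R(T)`: permutations of the entries preserving each row of `T`. -/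
def rowGroup (n : ℕ) (pos : Fin n → ℕ × ℕ) : Finset (Equiv.Perm (Fin n)) :=
  Finset.univ.filter fun σ => ∀ i, (pos (σ i)).1 = (pos i).1

/-- The column group `C(T)`: permutations of the entries preserving each column of `T`. -/
def colGroup (n : ℕ) (pos : Fin n → ℕ × ℕ) : Finset (Equiv.Perm (Fin n)) :=
  Finset.univ.filter fun σ => ∀ i, (pos (σ i)).2 = (pos i).2

/-- The `R(T)`-orbit sum of the monomial `p_{M,T} = ∏ᵢ xᵢ^{h i}` (each monomial of the
orbit appearing once, which equals the sum over cosets of the stabilizer). -/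
noncomputable def orbitSum (n : ℕ) (pos : Fin n → ℕ × ℕ) (h : Fin n → ℕ) :
    MvPolynomial (Fin n) ℚ :=
  ∑ d ∈ (rowGroup n pos).image (fun τ : Equiv.Perm (Fin n) => h ∘ ⇑τ),
    MvPolynomial.monomial (Finsupp.equivFunOnFinite.symm d) (1 : ℚ)

/-- The generalized higher Specht polynomial `F_{M,T}`: the image of the `R(T)`-orbit sum
of `p_{M,T}` under the operator `∑_{σ ∈ C(T)} sgn(σ) σ`. -/
noncomputable def genSpecht (n : ℕ) (pos : Fin n → ℕ × ℕ) (h : Fin n → ℕ) :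
    MvPolynomial (Fin n) ℚ :=
  ∑ σ ∈ colGroup n pos,
    ((Equiv.Perm.sign σ : ℤ) : ℚ) • MvPolynomial.rename (⇑σ) (orbitSum n pos h)

/-!
Write `h i` for the entry of `M` in the box of `T` holding `i`. The term `sgn(σ) σ(τ p_{M,T})`
of `F_{M,T}` contributes to the coefficient of `p_{M,T}` exactly when `h ∘ σ = h ∘ τ`. Such a
column permutation `σ` must be the identity, by induction over the rows: if `σ` fixes the rows
above row `r`, it sends row `r` to rows `≥ r`, so column strictness of `M` gives
`h i ≤ h (σ i)` on row `r`; the row permutation `τ` preserves the sum of `h` over row `r`, so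
equality holds throughout, and column strictness again forces `σ i = i`. Hence only `σ = τ = 1`
contributes, with coefficient `1`.
-/

open MvPolynomial

section ColumnPermutation

variable {ι α : Type*} [Fintype ι] [AddCommMonoid α] {pos : ι → ℕ × ℕ} {h : ι → α}
  {σ τ : Equiv.Perm ι}

lemma sum_row_comp_of_preserves_rows (hτ : ∀ i, (pos (τ i)).1 = (pos i).1) (r : ℕ) :
    ∑ i with (pos i).1 = r, h (τ i) = ∑ i with (pos i).1 = r, h i :=
  Finset.sum_equiv τ (by simp [hτ]) (fun _ _ => rfl)

variable [PartialOrder α] [IsOrderedCancelAddMonoid α]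

lemma apply_eq_self_of_row_eq (hinj : Function.Injective pos)
    (hstrict : ∀ i j, (pos i).2 = (pos j).2 → (pos i).1 < (pos j).1 → h i < h j)
    (hσ : ∀ i, (pos (σ i)).2 = (pos i).2) (hτ : ∀ i, (pos (τ i)).1 = (pos i).1)
    (heq : h ∘ σ = h ∘ τ) {r : ℕ} (habove : ∀ j, (pos j).1 < r → σ j = j)
    {i : ι} (hi : (pos i).1 = r) : σ i = i := by
  have hfixed_or_lt : ∀ j, (pos j).1 = r → σ j = j ∨ h j < h (σ j) := by
    intro j hj
    have hrow : r ≤ (pos (σ j)).1 := by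
      by_contra! hlt
      rw [σ.injective (habove (σ j) hlt)] at hlt
      omega
    rcases hrow.lt_or_eq with hlt | hrow_eq
    · exact Or.inr (hstrict j (σ j) (hσ j).symm (by omega))
    · exact Or.inl (hinj (Prod.ext (by omega) (hσ j)))
  have hle : ∀ j ∈ Finset.univ.filter (fun j => (pos j).1 = r), h j ≤ h (σ j) := by
    intro j hj
    rcases hfixed_or_lt j (Finset.mem_filter.1 hj).2 with hfix | hlt
    · rw [hfix]
    · exact hlt.le
  have hsum : ∑ i with (pos i).1 = r, h i = ∑ i with (pos i).1 = r, h (σ i) := by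
    rw [← sum_row_comp_of_preserves_rows hτ r]
    exact Finset.sum_congr rfl fun j _ => (congrFun heq j).symm
  have hval : h i = h (σ i) := (Finset.sum_eq_sum_iff_of_le hle).1 hsum i (by simpa using hi)
  exact (hfixed_or_lt i hi).resolve_right hval.not_lt

lemma eq_one_of_comp_eq_comp_of_preserves_cols (hinj : Function.Injective pos)
    (hstrict : ∀ i j, (pos i).2 = (pos j).2 → (pos i).1 < (pos j).1 → h i < h j)
    (hσ : ∀ i, (pos (σ i)).2 = (pos i).2) (hτ : ∀ i, (pos (τ i)).1 = (pos i).1)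
    (heq : h ∘ σ = h ∘ τ) : σ = 1 := by
  have hrows : ∀ r, ∀ i, (pos i).1 = r → σ i = i := by
    intro r
    induction r using Nat.strong_induction_on with
    | _ r ih =>
      exact fun i hi => apply_eq_self_of_row_eq hinj hstrict hσ hτ heq
        (fun j hj => ih _ hj j rfl) hi
  exact Equiv.ext fun i => hrows _ i rfl

end ColumnPermutation

lemma coeff_rename_perm {ι R : Type*} [Fintype ι] [CommSemiring R] (σ : Equiv.Perm ι)
    (p : MvPolynomial ι R) (g : ι → ℕ) :
    coeff (Finsupp.equivFunOnFinite.symm g) (rename σ p) =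
      coeff (Finsupp.equivFunOnFinite.symm (g ∘ σ)) p := by
  have hmap : Finsupp.mapDomain σ (Finsupp.equivFunOnFinite.symm (g ∘ σ)) =
      Finsupp.equivFunOnFinite.symm g := by
    ext j
    simp [Finsupp.mapDomain_equiv_apply]
  rw [← hmap, coeff_rename_mapDomain _ σ.injective]

section SpechtPolynomial

variable {n : ℕ} {pos : Fin n → ℕ × ℕ} {h : Fin n → ℕ}

lemma coeff_orbitSum (g : Fin n → ℕ) :
    coeff (Finsupp.equivFunOnFinite.symm g) (orbitSum n pos h) =
      if g ∈ (rowGroup n pos).image (fun τ : Equiv.Perm (Fin n) => h ∘ τ) then 1 else 0 := by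
  simp only [orbitSum, coeff_sum, coeff_monomial, Equiv.apply_eq_iff_eq]
  exact Finset.sum_ite_eq' _ g _

lemma coeff_genSpecht_self
    (hcol : ∀ σ ∈ colGroup n pos, ∀ τ ∈ rowGroup n pos, h ∘ τ = h ∘ σ → σ = 1) :
    coeff (Finsupp.equivFunOnFinite.symm h) (genSpecht n pos h) = 1 := by
  have hterm : ∀ σ : Equiv.Perm (Fin n),
      coeff (Finsupp.equivFunOnFinite.symm h)
          (((Equiv.Perm.sign σ : ℤ) : ℚ) • rename σ (orbitSum n pos h)) =
        ((Equiv.Perm.sign σ : ℤ) : ℚ) *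
          if h ∘ σ ∈ (rowGroup n pos).image (fun τ : Equiv.Perm (Fin n) => h ∘ τ)
          then 1 else 0 := by
    intro σ
    rw [coeff_smul, coeff_rename_perm, coeff_orbitSum, smul_eq_mul]
  have hone_col : (1 : Equiv.Perm (Fin n)) ∈ colGroup n pos := by simp [colGroup]
  have hone_row : (1 : Equiv.Perm (Fin n)) ∈ rowGroup n pos := by simp [rowGroup]
  rw [genSpecht, coeff_sum, Finset.sum_eq_single_of_mem 1 hone_col]
  · rw [hterm, if_pos (Finset.mem_image_of_mem _ hone_row)]
    simp
  · intro σ hσ hσ_ne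
    have hnot_mem : h ∘ σ ∉ (rowGroup n pos).image (fun τ : Equiv.Perm (Fin n) => h ∘ τ) := by
      intro hmem
      obtain ⟨τ, hτ, hτσ⟩ := Finset.mem_image.1 hmem
      exact hσ_ne (hcol σ hσ τ hτ hτσ)
    rw [hterm, if_neg hnot_mem, mul_zero]

end SpechtPolynomial

/-- The coefficient of the monomial `p_{M,T}` in the generalized higher Specht polynomial
`F_{M,T}` equals `1`.  Here `T` is a standard Young tableau of the shape `μ`, `M` a
semistandard tableau of the same shape, and `h i = M(pos i)` records the entry of `M` in
the box of `T` containing `i+1`. -/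
theorem stmt15 (n : ℕ) (μ : YoungDiagram) (pos : Fin n → ℕ × ℕ)
    (hT : IsSYT n pos) (hshape : Set.range pos = ↑μ.cells)
    (M : SemistandardYoungTableau μ) :
    MvPolynomial.coeff
      (Finsupp.equivFunOnFinite.symm fun i => M (pos i).1 (pos i).2)
      (genSpecht n pos fun i => M (pos i).1 (pos i).2) = 1 := by
  have hmem : ∀ i, pos i ∈ μ := fun i => by
    simpa [hshape] using Set.mem_range_self (f := pos) i
  refine coeff_genSpecht_self fun σ hσ τ hτ heq => ?_
  refine eq_one_of_comp_eq_comp_of_preserves_cols hT.1 (fun i j hcol hrow => ?_)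
    (Finset.mem_filter.1 hσ).2 (Finset.mem_filter.1 hτ).2 heq.symm
  simpa [hcol] using M.col_strict hrow (hmem j)
end

section
/- Let λ ⊢ n, T a standard Young tableau of shape λ, and M a semi-standard Young tableau of shape λ with non-negative entries such that all the entries in the first row of M are zero. Then the generalized higher Specht polynomial F_{ι̂M, ιT} in n+1 variables equals F_{M,T}, viewed as a polynomial in n+1 variables not involving x_{n+1}. Conversely, if the first row of M contains a non-zero entry, then F_{ι̂M, ιT} ≠ F_{M,T}, since F_{ι̂M, ιT} contains a monomial divisible by x_{n+1}. -/
/-- `ιT`: the standard Young tableau of shape `λ₊` obtained from `T` by placing the new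
entry `n+1` in the box added at the end of the first row. -/
def iotaPos (n : ℕ) (pos : Fin n → ℕ × ℕ) : Fin (n + 1) → ℕ × ℕ :=
  fun i =>
    if h : (i : ℕ) < n then pos ⟨i, h⟩
    else (0, (Finset.univ.filter fun j : Fin n => (pos j).1 = 0).card)

/-- The entries of `ι̂M` (of shape `μ₊`): the first row of `M` is shifted one box to the
right with a `0` placed in the upper-left box, and all other rows are unchanged. -/
def iotaEntry (μ : YoungDiagram) (M : SemistandardYoungTableau μ) : ℕ × ℕ → ℕ :=
  fun c => if c.1 = 0 then (if c.2 = 0 then 0 else M 0 (c.2 - 1)) else M c.1 c.2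

namespace Stmt16Aux

open Equiv

variable {n : ℕ}

/-- extend a permutation of `Fin n` to `Fin (n+1)` fixing `Fin.last n`. -/
def ext (σ : Perm (Fin n)) : Perm (Fin (n + 1)) :=
  finSuccEquivLast.symm.permCongr σ.optionCongr

@[simp] lemma ext_castSucc (σ : Perm (Fin n)) (i : Fin n) :
    ext σ (Fin.castSucc i) = Fin.castSucc (σ i) := by
  simp [ext, Equiv.permCongr_apply]

@[simp] lemma ext_last (σ : Perm (Fin n)) : ext σ (Fin.last n) = Fin.last n := by
  simp [ext, Equiv.permCongr_apply]

@[simp] lemma sign_ext (σ : Perm (Fin n)) :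
    Equiv.Perm.sign (ext σ) = Equiv.Perm.sign σ := by
  simp [ext]

/-- restrict a permutation of `Fin (n+1)` (intended: one fixing `Fin.last n`) to `Fin n`. -/
def restr (σ : Perm (Fin (n + 1))) : Perm (Fin n) :=
  Equiv.removeNone (finSuccEquivLast.permCongr σ)

lemma restr_spec (σ : Perm (Fin (n + 1))) (hσ : σ (Fin.last n) = Fin.last n) (i : Fin n) :
    σ (Fin.castSucc i) = Fin.castSucc (restr σ i) := by
  have hne : σ (Fin.castSucc i) ≠ Fin.last n := by
    intro h
    exact absurd (σ.injective (h.trans hσ.symm)) (Fin.castSucc_lt_last i).ne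
  obtain ⟨j, hj⟩ := (Fin.eq_castSucc_or_eq_last (σ (Fin.castSucc i))).resolve_right hne
  have he : (finSuccEquivLast.permCongr σ) (some i) = some j := by
    simp [Equiv.permCongr_apply, hj]
  have h2 : restr σ i = j := by
    have h3 := Equiv.removeNone_some _ ⟨j, he⟩
    rw [he] at h3
    exact (Option.some_injective _ h3.symm).symm
  rw [hj, h2]

lemma ext_restr (σ : Perm (Fin (n + 1))) (hσ : σ (Fin.last n) = Fin.last n) :
    ext (restr σ) = σ := by
  ext x
  rcases Fin.eq_castSucc_or_eq_last x with ⟨j, rfl⟩ | rfl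
  · rw [ext_castSucc, ← restr_spec σ hσ]
  · rw [ext_last, hσ]

lemma restr_ext (σ : Perm (Fin n)) : restr (ext σ) = σ := by
  refine Equiv.ext fun i => ?_
  have := restr_spec (ext σ) (ext_last σ) i
  rw [ext_castSucc] at this
  exact (Fin.castSucc_injective n this).symm

lemma rigidity {N : ℕ} (P : Fin N → ℕ × ℕ) (hP : Function.Injective P)
    (g : Fin N → ℕ)
    (hg : ∀ i j, (P i).2 = (P j).2 → (P i).1 < (P j).1 → g i < g j)
    (σ τ : Perm (Fin N))
    (hσ : ∀ i, (P (σ i)).2 = (P i).2)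
    (hτ : ∀ i, (P (τ i)).1 = (P i).1)
    (heq : g ∘ ⇑σ = g ∘ ⇑τ) : σ = 1 := by
  have key : ∀ r : ℕ, ∀ i : Fin N, (P i).1 = r → σ i = i := by
    intro r
    induction r using Nat.strong_induction_on with
    | _ r IH =>
      have ha : ∀ i : Fin N, (P i).1 = r → r ≤ (P (σ i)).1 := by
        intro i hi
        by_contra hlt
        push_neg at hlt
        have h2 : σ i = i := σ.injective (IH _ hlt _ rfl)
        rw [h2, hi] at hlt
        exact absurd hlt (lt_irrefl r)
      have hb : ∀ i : Fin N, (P i).1 = r → σ i ≠ i → g i < g (σ i) := by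
        intro i hi hne
        have hrow : (P i).1 < (P (σ i)).1 := by
          rcases lt_or_eq_of_le (ha i hi) with h' | h'
          · rw [hi]; exact h'
          · exfalso
            apply hne
            apply hP
            apply Prod.ext
            · rw [← h', hi]
            · exact hσ i
        exact hg i (σ i) (hσ i).symm hrow
      intro i₀ hi₀
      by_contra hne
      classical
      set Rr : Finset (Fin N) := Finset.univ.filter (fun i => (P i).1 = r) with hRr
      have hmem : i₀ ∈ Rr := by simp [hRr, hi₀]
      have hle : ∀ i ∈ Rr, g i ≤ g (σ i) := by
        intro i hi
        rcases eq_or_ne (σ i) i with h | h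
        · rw [h]
        · exact (hb i (by simpa [hRr] using hi) h).le
      have hlt : ∑ i ∈ Rr, g i < ∑ i ∈ Rr, g (σ i) :=
        Finset.sum_lt_sum hle ⟨i₀, hmem, hb i₀ hi₀ hne⟩
      have hc : ∑ i ∈ Rr, g (σ i) = ∑ i ∈ Rr, g i := by
        have h1 : ∀ i, g (σ i) = g (τ i) := fun i => congrFun heq i
        calc ∑ i ∈ Rr, g (σ i) = ∑ i ∈ Rr, g (τ i) :=
              Finset.sum_congr rfl (fun i _ => h1 i)
          _ = ∑ i ∈ Rr, g i :=
              Finset.sum_equiv τ (fun i => by simp [hRr, hτ i]) (fun i _ => rfl)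
      omega
  exact Equiv.ext fun i => key (P i).1 i rfl

end Stmt16Aux

/-- If all first-row entries of `M` vanish then `F_{ι̂M, ιT} = F_{M,T}` (viewed as a
polynomial in `n+1` variables not involving `x_{n+1}`), and conversely: if the first row
of `M` contains a non-zero entry then they differ, since `F_{ι̂M, ιT}` contains a monomial
divisible by `x_{n+1}`. -/
theorem stmt16 (n : ℕ) (hn : 0 < n) (μ : YoungDiagram) (pos : Fin n → ℕ × ℕ)
    (hT : IsSYT n pos) (hshape : Set.range pos = ↑μ.cells)
    (M : SemistandardYoungTableau μ) :
    ((∀ j : ℕ, (0, j) ∈ μ → M 0 j = 0) ↔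
      genSpecht (n + 1) (iotaPos n pos) (fun i => iotaEntry μ M (iotaPos n pos i)) =
        MvPolynomial.rename (Fin.castSucc : Fin n → Fin (n + 1))
          (genSpecht n pos fun i => M (pos i).1 (pos i).2)) ∧
    ((∃ j : ℕ, (0, j) ∈ μ ∧ M 0 j ≠ 0) →
      ∃ d : Fin (n + 1) →₀ ℕ,
        MvPolynomial.coeff d
          (genSpecht (n + 1) (iotaPos n pos) fun i => iotaEntry μ M (iotaPos n pos i)) ≠ 0
        ∧ d (Fin.last n) ≠ 0) := by
  classical
  obtain ⟨hinj, hSYT⟩ := hT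
  set k : ℕ := (Finset.univ.filter fun j : Fin n => (pos j).1 = 0).card with hkdef
  set h' : Fin (n + 1) → ℕ := fun i => iotaEntry μ M (iotaPos n pos i) with hh'
  set h : Fin n → ℕ := fun i => M (pos i).1 (pos i).2 with hh
  have hposμ : ∀ i : Fin n, pos i ∈ μ := by
    intro i
    have : pos i ∈ (↑μ.cells : Set (ℕ × ℕ)) := hshape ▸ Set.mem_range_self i
    exact (YoungDiagram.mem_cells _).mp (Finset.mem_coe.mp this)
  have hrow0 : ∀ c : ℕ, ((0, c) ∈ μ ↔ c < k) := by
    have hcard : k = μ.rowLen 0 := by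
      have h1 : (μ.row 0).card = μ.rowLen 0 := by
        rw [YoungDiagram.row_eq_prod]; simp
      rw [← h1, hkdef]
      apply Finset.card_bij (fun i _ => pos i)
      · intro a ha
        rw [YoungDiagram.mem_row_iff]
        exact ⟨hposμ a, (Finset.mem_filter.mp ha).2⟩
      · intro a _ b _ hab; exact hinj hab
      · intro c hc
        have hcr : c ∈ (↑μ.cells : Set (ℕ × ℕ)) :=
          Finset.mem_coe.mpr ((YoungDiagram.mem_cells _).mpr (YoungDiagram.mem_row_iff.mp hc).1)
        rw [← hshape] at hcr
        obtain ⟨i, hi⟩ := hcr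
        exact ⟨i, Finset.mem_filter.mpr ⟨Finset.mem_univ i,
          by rw [hi, (YoungDiagram.mem_row_iff.mp hc).2]⟩, hi⟩
    intro c
    rw [hcard, YoungDiagram.mem_iff_lt_rowLen]
  have hk0 : 0 < k := by
    have h00 : (0, 0) ∈ μ := μ.up_left_mem (Nat.zero_le _) (Nat.zero_le _) (hposμ ⟨0, hn⟩)
    exact (hrow0 0).mp h00
  have hcolk : ∀ i : Fin n, (pos i).2 ≠ k := by
    intro i hik
    have hm : ((pos i).1, k) ∈ μ := by rw [← hik]; exact hposμ i
    have h0k : (0, k) ∈ μ := μ.up_left_mem (Nat.zero_le _) le_rfl hm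
    exact absurd ((hrow0 k).mp h0k) (lt_irrefl k)
  have hιcast : ∀ i : Fin n, iotaPos n pos (Fin.castSucc i) = pos i := by
    intro i
    simp [iotaPos, i.isLt]
  have hιlast : iotaPos n pos (Fin.last n) = (0, k) := by
    simp [iotaPos, hkdef]
  have hιinj : Function.Injective (iotaPos n pos) := by
    intro a b hab
    rcases Fin.eq_castSucc_or_eq_last a with ⟨i, rfl⟩ | rfl <;>
      rcases Fin.eq_castSucc_or_eq_last b with ⟨j, rfl⟩ | rfl
    · rw [hιcast, hιcast] at hab; exact congrArg Fin.castSucc (hinj hab)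
    · rw [hιcast, hιlast] at hab; exact absurd (congrArg Prod.snd hab) (hcolk i)
    · rw [hιlast, hιcast] at hab; exact absurd (congrArg Prod.snd hab.symm) (hcolk j)
    · rfl
  have hstrict' : ∀ r c r' : ℕ, (r', c) ∈ μ → r < r' →
      iotaEntry μ M (r, c) < iotaEntry μ M (r', c) := by
    intro r c r' hmem hrr
    have hr' : r' ≠ 0 := by omega
    have hRHS : iotaEntry μ M (r', c) = M r' c := by simp [iotaEntry, hr']
    rw [hRHS]
    rcases Nat.eq_zero_or_pos r with rfl | hr
    · have h0c : M 0 c < M r' c := M.col_strict (by omega) hmem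
      rcases Nat.eq_zero_or_pos c with rfl | hc
      · simpa [iotaEntry] using lt_of_le_of_lt (Nat.zero_le (M 0 0)) h0c
      · have hup : (0, c) ∈ μ := μ.up_left_mem (Nat.zero_le _) le_rfl hmem
        have h1 : M 0 (c - 1) ≤ M 0 c := M.row_weak (by omega) hup
        have h2 : iotaEntry μ M (0, c) = M 0 (c - 1) := by simp [iotaEntry, hc.ne']
        omega
    · have h2 : iotaEntry μ M (r, c) = M r c := by simp [iotaEntry, hr.ne']
      rw [h2]; exact M.col_strict hrr hmem
  have hstrict : ∀ i j : Fin (n + 1),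
      (iotaPos n pos i).2 = (iotaPos n pos j).2 →
      (iotaPos n pos i).1 < (iotaPos n pos j).1 → h' i < h' j := by
    intro i j hcol hrowlt
    rcases Fin.eq_castSucc_or_eq_last j with ⟨b, rfl⟩ | rfl
    swap
    · rw [hιlast] at hrowlt; exact absurd hrowlt (Nat.not_lt_zero _)
    rcases Fin.eq_castSucc_or_eq_last i with ⟨a, rfl⟩ | rfl
    swap
    · rw [hιlast, hιcast] at hcol; exact absurd hcol.symm (hcolk b)
    rw [hιcast, hιcast] at hcol hrowlt
    have hb := hposμ b
    have hgoal := hstrict' (pos a).1 (pos a).2 (pos b).1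
      (by rw [hcol]; exact hb) hrowlt
    have e1 : ((pos a).1, (pos a).2) = pos a := rfl
    have e2 : ((pos b).1, (pos a).2) = pos b := by rw [hcol]
    rw [e1, e2] at hgoal
    simpa [hh', hιcast] using hgoal
  have hfix : ∀ σ ∈ colGroup (n + 1) (iotaPos n pos), σ (Fin.last n) = Fin.last n := by
    intro σ hσ
    have hc := (Finset.mem_filter.mp hσ).2 (Fin.last n)
    rcases Fin.eq_castSucc_or_eq_last (σ (Fin.last n)) with ⟨j, hj⟩ | hj
    · rw [hj, hιcast, hιlast] at hc
      exact absurd hc (hcolk j)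
    · exact hj
  set S' : Finset (Fin (n + 1) → ℕ) :=
    (rowGroup (n + 1) (iotaPos n pos)).image
      (fun τ : Equiv.Perm (Fin (n + 1)) => h' ∘ ⇑τ) with hS'
  have hcoeff : ∀ e : Fin (n + 1) → ℕ,
      MvPolynomial.coeff (Finsupp.equivFunOnFinite.symm e)
        (genSpecht (n + 1) (iotaPos n pos) h')
      = ∑ σ ∈ colGroup (n + 1) (iotaPos n pos),
          ((Equiv.Perm.sign σ : ℤ) : ℚ) * (if e ∘ ⇑σ ∈ S' then 1 else 0) := by
    intro e
    rw [genSpecht, MvPolynomial.coeff_sum]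
    apply Finset.sum_congr rfl
    intro σ hσ
    rw [MvPolynomial.coeff_smul, smul_eq_mul]
    congr 1
    rw [orbitSum, map_sum]
    simp_rw [MvPolynomial.rename_monomial]
    rw [MvPolynomial.coeff_sum]
    simp_rw [MvPolynomial.coeff_monomial]
    have hcond : ∀ d : Fin (n + 1) → ℕ,
        (Finsupp.mapDomain (⇑σ) (Finsupp.equivFunOnFinite.symm d)
          = Finsupp.equivFunOnFinite.symm e) ↔ d = e ∘ ⇑σ := by
      intro d
      constructor
      · intro hd
        funext x
        have hx := DFunLike.congr_fun hd (σ x)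
        rw [Finsupp.mapDomain_equiv_apply] at hx
        simpa using hx
      · rintro rfl
        ext x
        rw [Finsupp.mapDomain_equiv_apply]
        simp
    simp_rw [hcond]
    rw [Finset.sum_ite_eq' S' (e ∘ ⇑σ) (fun _ => (1 : ℚ))]
  have part2 : (∃ j : ℕ, (0, j) ∈ μ ∧ M 0 j ≠ 0) →
      ∃ d : Fin (n + 1) →₀ ℕ,
        MvPolynomial.coeff d (genSpecht (n + 1) (iotaPos n pos) h') ≠ 0
        ∧ d (Fin.last n) ≠ 0 := by
    rintro ⟨j, hjμ, hjne⟩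
    have hlast : h' (Fin.last n) = M 0 (k - 1) := by
      show iotaEntry μ M (iotaPos n pos (Fin.last n)) = M 0 (k - 1)
      rw [hιlast]
      simp [iotaEntry, hk0.ne']
    have hlast_ne : h' (Fin.last n) ≠ 0 := by
      rw [hlast]
      have hjk : j < k := (hrow0 j).mp hjμ
      have hk1 : (0, k - 1) ∈ μ := (hrow0 _).mpr (by omega)
      have hle := M.row_weak_of_le (by omega : j ≤ k - 1) hk1
      omega
    refine ⟨Finsupp.equivFunOnFinite.symm h', ?_, by simpa using hlast_ne⟩
    have hone : (1 : Equiv.Perm (Fin (n + 1))) ∈ colGroup (n + 1) (iotaPos n pos) := by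
      simp [colGroup]
    have h1row : (1 : Equiv.Perm (Fin (n + 1))) ∈ rowGroup (n + 1) (iotaPos n pos) := by
      simp [rowGroup]
    have hsum : (∑ σ ∈ colGroup (n + 1) (iotaPos n pos),
        ((Equiv.Perm.sign σ : ℤ) : ℚ) * (if h' ∘ ⇑σ ∈ S' then 1 else 0)) = 1 := by
      rw [Finset.sum_eq_single_of_mem 1 hone]
      · have hmem : h' ∘ ⇑(1 : Equiv.Perm (Fin (n + 1))) ∈ S' :=
          Finset.mem_image_of_mem _ h1row
        have hmem' : h' ∈ S' := by simpa using hmem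
        simp [hmem']
      · intro σ hσ hσne
        have hnot : h' ∘ ⇑σ ∉ S' := by
          intro hmem
          obtain ⟨τ, hτ, hτeq⟩ := Finset.mem_image.mp hmem
          exact hσne (Stmt16Aux.rigidity (iotaPos n pos) hιinj h' hstrict σ τ
            ((Finset.mem_filter.mp hσ).2) ((Finset.mem_filter.mp hτ).2) hτeq.symm)
        rw [if_neg hnot, mul_zero]
    rw [hcoeff h', hsum]
    norm_num
  have forward : (∀ j : ℕ, (0, j) ∈ μ → M 0 j = 0) →
      genSpecht (n + 1) (iotaPos n pos) h'
        = MvPolynomial.rename (Fin.castSucc : Fin n → Fin (n + 1)) (genSpecht n pos h) := by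
    intro hz
    have h'zero : ∀ i : Fin (n + 1), (iotaPos n pos i).1 = 0 → h' i = 0 := by
      intro i hi
      rcases Fin.eq_castSucc_or_eq_last i with ⟨a, rfl⟩ | rfl
      · rw [hιcast] at hi
        have hmem : (0, (pos a).2) ∈ μ := by rw [← hi]; exact hposμ a
        have he : h' (Fin.castSucc a) = iotaEntry μ M (pos a) := by
          show iotaEntry μ M (iotaPos n pos (Fin.castSucc a)) = iotaEntry μ M (pos a)
          rw [hιcast]
        rw [he, iotaEntry]
        rcases Nat.eq_zero_or_pos (pos a).2 with hc | hc
        · simp [hi, hc]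
        · simp only [hi, if_true, hc.ne', if_false]
          exact hz _ (μ.up_left_mem le_rfl (by omega) hmem)
      · show iotaEntry μ M (iotaPos n pos (Fin.last n)) = 0
        rw [hιlast]
        simp only [iotaEntry, hk0.ne', if_false, if_true]
        exact hz _ ((hrow0 _).mpr (by omega))
    have h'cast : ∀ i : Fin n, h' (Fin.castSucc i) = h i := by
      intro i
      by_cases h0 : (pos i).1 = 0
      · rw [h'zero (Fin.castSucc i) (by rw [hιcast]; exact h0)]
        have hmem : (0, (pos i).2) ∈ μ := by rw [← h0]; exact hposμ i
        have hi0 : h i = 0 := by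
          show M (pos i).1 (pos i).2 = 0
          rw [h0]; exact hz _ hmem
        rw [hi0]
      · show iotaEntry μ M (iotaPos n pos (Fin.castSucc i)) = M (pos i).1 (pos i).2
        rw [hιcast, iotaEntry, if_neg h0]
    have himg : (rowGroup (n + 1) (iotaPos n pos)).image
          (fun τ : Equiv.Perm (Fin (n + 1)) => h' ∘ ⇑τ)
        = ((rowGroup n pos).image (fun τ : Equiv.Perm (Fin n) => h ∘ ⇑τ)).image
            (fun d => Fin.snoc d 0) := by
      ext d
      simp only [Finset.mem_image, exists_exists_and_eq_and]
      constructor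
      · rintro ⟨τ, hτ, rfl⟩
        have hτrow := (Finset.mem_filter.mp hτ).2
        set w : Equiv.Perm (Fin (n + 1)) := Equiv.swap (Fin.last n) (τ (Fin.last n)) with hw
        set ρ : Equiv.Perm (Fin (n + 1)) := w * τ with hρ
        have hτlastrow : (iotaPos n pos (τ (Fin.last n))).1 = 0 := by
          rw [hτrow, hιlast]
        have hswap_row : ∀ x, (iotaPos n pos (w x)).1 = (iotaPos n pos x).1 := by
          intro x
          rcases eq_or_ne x (Fin.last n) with rfl | hx1
          · rw [hw, Equiv.swap_apply_left, hτlastrow, hιlast]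
          rcases eq_or_ne x (τ (Fin.last n)) with rfl | hx2
          · rw [hw, Equiv.swap_apply_right, hιlast, hτlastrow]
          · rw [hw, Equiv.swap_apply_of_ne_of_ne hx1 hx2]
        have hswap_val : ∀ y, h' (w y) = h' y := by
          intro y
          rcases eq_or_ne y (Fin.last n) with rfl | hy1
          · rw [hw, Equiv.swap_apply_left, h'zero _ hτlastrow,
              h'zero (Fin.last n) (by rw [hιlast])]
          rcases eq_or_ne y (τ (Fin.last n)) with rfl | hy2
          · rw [hw, Equiv.swap_apply_right, h'zero (Fin.last n) (by rw [hιlast]),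
              h'zero _ hτlastrow]
          · rw [hw, Equiv.swap_apply_of_ne_of_ne hy1 hy2]
        have hρlast : ρ (Fin.last n) = Fin.last n := by
          rw [hρ, Equiv.Perm.mul_apply, hw, Equiv.swap_apply_right]
        set τ' := Stmt16Aux.restr ρ with hτ'
        have hτ'row : τ' ∈ rowGroup n pos := by
          rw [rowGroup, Finset.mem_filter]
          refine ⟨Finset.mem_univ _, fun i => ?_⟩
          have hspec := Stmt16Aux.restr_spec ρ hρlast i
          have h3 : (iotaPos n pos (ρ (Fin.castSucc i))).1
              = (iotaPos n pos (Fin.castSucc i)).1 := by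
            rw [hρ, Equiv.Perm.mul_apply, hswap_row, hτrow]
          rw [hspec, hιcast, hιcast] at h3
          exact h3
        refine ⟨τ', hτ'row, ?_⟩
        funext x
        rcases Fin.eq_castSucc_or_eq_last x with ⟨i, rfl⟩ | rfl
        · show (Fin.snoc (h ∘ ⇑τ') 0 : Fin (n + 1) → ℕ) (Fin.castSucc i)
            = h' (τ (Fin.castSucc i))
          rw [Fin.snoc_castSucc]
          show h (τ' i) = h' (τ (Fin.castSucc i))
          rw [← h'cast (τ' i), ← Stmt16Aux.restr_spec ρ hρlast i, hρ,
            Equiv.Perm.mul_apply, hswap_val]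
        · show (Fin.snoc (h ∘ ⇑τ') 0 : Fin (n + 1) → ℕ) (Fin.last n)
            = h' (τ (Fin.last n))
          rw [Fin.snoc_last, h'zero _ hτlastrow]
      · rintro ⟨τ', hτ', rfl⟩
        refine ⟨Stmt16Aux.ext τ', ?_, ?_⟩
        · rw [rowGroup, Finset.mem_filter]
          refine ⟨Finset.mem_univ _, fun i => ?_⟩
          rcases Fin.eq_castSucc_or_eq_last i with ⟨a, rfl⟩ | rfl
          · rw [Stmt16Aux.ext_castSucc, hιcast, hιcast]
            exact (Finset.mem_filter.mp hτ').2 a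
          · rw [Stmt16Aux.ext_last]
        · funext x
          show h' (Stmt16Aux.ext τ' x) = (Fin.snoc (h ∘ ⇑τ') 0 : Fin (n + 1) → ℕ) x
          rcases Fin.eq_castSucc_or_eq_last x with ⟨i, rfl⟩ | rfl
          · rw [Fin.snoc_castSucc, Stmt16Aux.ext_castSucc, h'cast]
            rfl
          · rw [Fin.snoc_last, Stmt16Aux.ext_last]
            exact h'zero (Fin.last n) (by rw [hιlast])
    have hsnoc_inj : ∀ d₁ d₂ : Fin n → ℕ,
        (Fin.snoc d₁ 0 : Fin (n + 1) → ℕ) = Fin.snoc d₂ 0 → d₁ = d₂ := by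
      intro d₁ d₂ hd
      funext i
      have h4 := congrFun hd (Fin.castSucc i)
      rwa [Fin.snoc_castSucc, Fin.snoc_castSucc] at h4
    have hmapd : ∀ d : Fin n → ℕ,
        Finsupp.mapDomain (Fin.castSucc : Fin n → Fin (n + 1))
            (Finsupp.equivFunOnFinite.symm d)
          = Finsupp.equivFunOnFinite.symm (Fin.snoc d 0) := by
      intro d
      ext x
      rcases Fin.eq_castSucc_or_eq_last x with ⟨i, rfl⟩ | rfl
      · rw [Finsupp.mapDomain_apply (Fin.castSucc_injective n)]
        simp
      · rw [Finsupp.mapDomain_notin_range]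
        · simp
        · rintro ⟨i, hi⟩
          exact absurd hi (Fin.castSucc_lt_last i).ne
    have hOS : orbitSum (n + 1) (iotaPos n pos) h'
        = MvPolynomial.rename (Fin.castSucc : Fin n → Fin (n + 1)) (orbitSum n pos h) := by
      rw [orbitSum, orbitSum, himg,
        Finset.sum_image (fun d₁ _ d₂ _ => hsnoc_inj d₁ d₂), map_sum]
      apply Finset.sum_congr rfl
      intro d _
      rw [MvPolynomial.rename_monomial, hmapd]
    rw [genSpecht, genSpecht, map_sum]
    refine Finset.sum_nbij' (i := fun σ => Stmt16Aux.restr σ)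
      (j := fun σ' => Stmt16Aux.ext σ') ?_ ?_ ?_ ?_ ?_
    · intro σ hσ
      rw [colGroup, Finset.mem_filter]
      refine ⟨Finset.mem_univ _, fun i => ?_⟩
      have hspec := Stmt16Aux.restr_spec σ (hfix σ hσ) i
      have h3 := (Finset.mem_filter.mp hσ).2 (Fin.castSucc i)
      rw [hspec, hιcast, hιcast] at h3
      exact h3
    · intro σ' hσ'
      rw [colGroup, Finset.mem_filter]
      refine ⟨Finset.mem_univ _, fun i => ?_⟩
      rcases Fin.eq_castSucc_or_eq_last i with ⟨a, rfl⟩ | rfl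
      · rw [Stmt16Aux.ext_castSucc, hιcast, hιcast]
        exact (Finset.mem_filter.mp hσ').2 a
      · rw [Stmt16Aux.ext_last]
    · intro σ hσ
      exact Stmt16Aux.ext_restr σ (hfix σ hσ)
    · intro σ' _
      exact Stmt16Aux.restr_ext σ'
    · intro σ hσ
      have hfixσ := hfix σ hσ
      have hcomp : ⇑σ ∘ (Fin.castSucc : Fin n → Fin (n + 1))
          = (Fin.castSucc : Fin n → Fin (n + 1)) ∘ ⇑(Stmt16Aux.restr σ) := by
        funext i
        exact Stmt16Aux.restr_spec σ hfixσ i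
      have hs : Equiv.Perm.sign σ = Equiv.Perm.sign (Stmt16Aux.restr σ) := by
        conv_lhs => rw [← Stmt16Aux.ext_restr σ hfixσ]
        rw [Stmt16Aux.sign_ext]
      rw [map_smul, hOS, MvPolynomial.rename_rename, MvPolynomial.rename_rename, hcomp,
        ← MvPolynomial.rename_rename, hs]
  refine ⟨⟨fun hz => forward hz, fun heq => ?_⟩, part2⟩
  intro j hjμ
  by_contra hne
  obtain ⟨d, hd, hdlast⟩ := part2 ⟨j, hjμ, hne⟩
  rw [heq] at hd
  obtain ⟨u, hu, -⟩ := MvPolynomial.coeff_rename_ne_zero _ _ _ hd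
  apply hdlast
  rw [← hu, Finsupp.mapDomain_notin_range]
  rintro ⟨i, hi⟩
  exact absurd hi (Fin.castSucc_lt_last i).ne
end
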